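/- For graphs without node attributes and the graph GOSPA pseudometric d̃^{(c,ε)} computed by minimizing over the binary assignment matrices 𝒲_{X,Y}, one has d̃^{(c,ε)}(X,Y) = 0 if and only if X and Y are isomorphic, i.e., n_X = n_Y and there exists an n_X × n_X permutation matrix P with A_X P = P A_Y. -/

import Mathlib

/-!
A zero cost forces every node of `X` and of `Y` to be assigned, so the top-left block of an
optimal `W` is a `{0,1}`-matrix whose rows and columns all sum to 1; counting its entries by
rows and by columns gives `n_X = n_Y`, and a zero edge cost is exactly the intertwining
relation `A_X W' = W' A_Y`. Conversely, a permutation matrix bordered by zeros has cost zero.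
Since `𝒲_{X,Y}` is finite and nonempty, the infimum is attained, so `d̃ = 0` iff some `W` has
cost zero.
-/

open scoped BigOperators Matrix

namespace GraphGOSPA

/-- An undirected unweighted graph without node attributes: a number of nodes
together with a symmetric `{0,1}`-valued adjacency matrix with zero diagonal. -/
structure GraphNA where
  n : ℕ
  A : Matrix (Fin n) (Fin n) ℝ
  A_symm : A.IsSymm
  A_01 : ∀ i j, A i j = 0 ∨ A i j = 1
  A_diag : ∀ i, A i i = 0

/-- Componentwise 1-norm of a matrix. -/
def onorm {m n : ℕ} (M : Matrix (Fin m) (Fin n) ℝ) : ℝ :=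
  ∑ i, ∑ j, |M i j|

/-- The top-left `m × n` block of an `(m+1) × (n+1)` matrix. -/
def topLeft {m n : ℕ} (W : Matrix (Fin (m+1)) (Fin (n+1)) ℝ) :
    Matrix (Fin m) (Fin n) ℝ :=
  fun i j => W i.castSucc j.castSucc

/-- The set `𝒲_{X,Y}` of binary assignment matrices: entries in `{0,1}`,
each of the first `nY` columns sums to 1, each of the first `nX` rows sums to 1,
and the bottom-right corner is 0. -/
def Wset (nX nY : ℕ) : Set (Matrix (Fin (nX+1)) (Fin (nY+1)) ℝ) :=
  {W | (∀ i j, W i j = 0 ∨ W i j = 1) ∧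
    (∀ j : Fin nY, ∑ i, W i j.castSucc = 1) ∧
    (∀ i : Fin nX, ∑ j, W i.castSucc j = 1) ∧
    W (Fin.last nX) (Fin.last nY) = 0}

/-- The relaxed set `𝒲̄_{X,Y}`: nonnegative entries, with the same row/column sum
constraints and zero bottom-right corner. -/
def WbarSet (nX nY : ℕ) : Set (Matrix (Fin (nX+1)) (Fin (nY+1)) ℝ) :=
  {W | (∀ i j, 0 ≤ W i j) ∧
    (∀ j : Fin nY, ∑ i, W i j.castSucc = 1) ∧
    (∀ i : Fin nX, ∑ j, W i.castSucc j = 1) ∧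
    W (Fin.last nX) (Fin.last nY) = 0}

/-- The edge mismatch cost `e_{X,Y}(W)^p = (ε^p/2)‖A_X W' − W' A_Y‖`. -/
noncomputable def edgeCost (p ε : ℝ) (X Y : GraphNA)
    (W : Matrix (Fin (X.n+1)) (Fin (Y.n+1)) ℝ) : ℝ :=
  ε ^ p / 2 * onorm (X.A * topLeft W - topLeft W * Y.A)

/-- The unassignment cost `(c^p/2)(Σ_i W(i, n_Y+1) + Σ_j W(n_X+1, j))`. -/
noncomputable def missFalseCost (p c : ℝ) (X Y : GraphNA)
    (W : Matrix (Fin (X.n+1)) (Fin (Y.n+1)) ℝ) : ℝ :=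
  c ^ p / 2 * ((∑ i : Fin X.n, W i.castSucc (Fin.last Y.n)) +
    (∑ j : Fin Y.n, W (Fin.last X.n) j.castSucc))

/-- The graph GOSPA pseudometric `d̃^{(c,ε)}` for graphs without node attributes,
computed by minimizing over the binary assignment matrices `𝒲_{X,Y}`. -/
noncomputable def dtilde (p c ε : ℝ) (X Y : GraphNA) : ℝ :=
  sInf {v | ∃ W ∈ Wset X.n Y.n,
    v = missFalseCost p c X Y W + edgeCost p ε X Y W} ^ (1 / p)

/-- A permutation matrix: a `{0,1}`-valued square matrix whose rows and columns
each sum to 1. -/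
def IsPermMatrix {n : ℕ} (P : Matrix (Fin n) (Fin n) ℝ) : Prop :=
  (∀ i j, P i j = 0 ∨ P i j = 1) ∧
    (∀ i, ∑ j, P i j = 1) ∧ (∀ j, ∑ i, P i j = 1)

/-- Two graphs without node attributes are isomorphic if they have the same number of
nodes and there is a permutation matrix `P` with `A_X P = P A_Y`. -/
def Isomorphic (X Y : GraphNA) : Prop :=
  ∃ h : X.n = Y.n, ∃ P : Matrix (Fin X.n) (Fin X.n) ℝ, IsPermMatrix P ∧
    X.A * P = P * (Y.A.submatrix (Fin.cast h) (Fin.cast h))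

lemma onorm_nonneg {m n : ℕ} (M : Matrix (Fin m) (Fin n) ℝ) : 0 ≤ onorm M :=
  Finset.sum_nonneg fun _ _ => Finset.sum_nonneg fun _ _ => abs_nonneg _

lemma onorm_eq_zero_iff {m n : ℕ} {M : Matrix (Fin m) (Fin n) ℝ} : onorm M = 0 ↔ M = 0 := by
  simp [onorm, Finset.sum_eq_zero_iff_of_nonneg, Finset.sum_nonneg, ← Matrix.ext_iff]

lemma sInf_eq_zero_iff_zero_mem {S : Set ℝ} (hne : S.Nonempty) (hfin : S.Finite)
    (hnonneg : ∀ v ∈ S, 0 ≤ v) : sInf S = 0 ↔ (0 : ℝ) ∈ S :=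
  ⟨fun h => h ▸ hne.csInf_mem hfin, fun h =>
    le_antisymm (csInf_le ⟨0, hnonneg⟩ h) (le_csInf hne hnonneg)⟩

/-- The rectangular analogue of `IsPermMatrix`, which avoids casting `Fin n` to `Fin m`. -/
def IsAssignmentMatrix {m n : ℕ} (M : Matrix (Fin m) (Fin n) ℝ) : Prop :=
  (∀ i j, M i j = 0 ∨ M i j = 1) ∧ (∀ i, ∑ j, M i j = 1) ∧ (∀ j, ∑ i, M i j = 1)

lemma card_eq_of_sum_rows_eq_one_of_sum_cols_eq_one {ι κ : Type*} [Fintype ι] [Fintype κ]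
    {M : Matrix ι κ ℝ} (hrow : ∀ i, ∑ j, M i j = 1) (hcol : ∀ j, ∑ i, M i j = 1) :
    Fintype.card ι = Fintype.card κ := by
  have h : (Fintype.card ι : ℝ) = Fintype.card κ := calc
    (Fintype.card ι : ℝ) = ∑ i, ∑ j, M i j := by simp [hrow]
    _ = ∑ j, ∑ i, M i j := Finset.sum_comm
    _ = Fintype.card κ := by simp [hcol]
  exact_mod_cast h

lemma IsAssignmentMatrix.dim_eq {m n : ℕ} {M : Matrix (Fin m) (Fin n) ℝ}
    (hM : IsAssignmentMatrix M) : m = n := by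
  simpa using card_eq_of_sum_rows_eq_one_of_sum_cols_eq_one hM.2.1 hM.2.2

lemma exists_isPermMatrix_comm_iff {m n : ℕ} (h : m = n) (A : Matrix (Fin m) (Fin m) ℝ)
    (B : Matrix (Fin n) (Fin n) ℝ) :
    (∃ P, IsPermMatrix P ∧ A * P = P * B.submatrix (Fin.cast h) (Fin.cast h)) ↔
      ∃ M : Matrix (Fin m) (Fin n) ℝ, IsAssignmentMatrix M ∧ A * M = M * B := by
  subst h
  simp [IsPermMatrix, IsAssignmentMatrix]

lemma isomorphic_iff_exists_isAssignmentMatrix {X Y : GraphNA} :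
    Isomorphic X Y ↔
      ∃ M : Matrix (Fin X.n) (Fin Y.n) ℝ, IsAssignmentMatrix M ∧ X.A * M = M * Y.A := by
  constructor
  · rintro ⟨h, hP⟩
    exact (exists_isPermMatrix_comm_iff h X.A Y.A).1 hP
  · rintro ⟨M, hM, hcomm⟩
    exact ⟨hM.dim_eq, (exists_isPermMatrix_comm_iff hM.dim_eq X.A Y.A).2 ⟨M, hM, hcomm⟩⟩

section Padding

variable {m n : ℕ}

def padZero (M : Matrix (Fin m) (Fin n) ℝ) : Matrix (Fin (m+1)) (Fin (n+1)) ℝ :=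
  Matrix.of fun i j => Fin.lastCases 0 (fun i' => Fin.lastCases 0 (M i') j) i

@[simp] lemma padZero_castSucc_castSucc (M : Matrix (Fin m) (Fin n) ℝ) (i : Fin m) (j : Fin n) :
    padZero M i.castSucc j.castSucc = M i j := by
  simp [padZero]

@[simp] lemma padZero_castSucc_last (M : Matrix (Fin m) (Fin n) ℝ) (i : Fin m) :
    padZero M i.castSucc (Fin.last n) = 0 := by
  simp [padZero]

@[simp] lemma padZero_last (M : Matrix (Fin m) (Fin n) ℝ) (j : Fin (n+1)) :
    padZero M (Fin.last m) j = 0 := by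
  simp [padZero]

@[simp] lemma topLeft_padZero (M : Matrix (Fin m) (Fin n) ℝ) : topLeft (padZero M) = M := by
  ext i j
  simp [topLeft]

lemma padZero_mem_Wset {M : Matrix (Fin m) (Fin n) ℝ} (hM : IsAssignmentMatrix M) :
    padZero M ∈ Wset m n := by
  refine ⟨fun i j => ?_, fun j => ?_, fun i => ?_, padZero_last M _⟩
  · induction i using Fin.lastCases with
    | last => simp
    | cast i =>
      induction j using Fin.lastCases with
      | last => simp
      | cast j => simpa using hM.1 i j
  · simpa [Fin.sum_univ_castSucc] using hM.2.2 j
  · simpa [Fin.sum_univ_castSucc] using hM.2.1 i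

lemma Wset_nonempty : (Wset m n).Nonempty := by
  -- every node of both graphs unassigned
  refine ⟨Matrix.of fun i j =>
    Fin.lastCases (Fin.lastCases 0 (fun _ => 1) j) (fun _ => Fin.lastCases 1 (fun _ => 0) j) i,
    fun i j => ?_, fun j => ?_, fun i => ?_, by simp⟩
  · induction i using Fin.lastCases <;> induction j using Fin.lastCases <;> simp
  · simp [Fin.sum_univ_castSucc]
  · simp [Fin.sum_univ_castSucc]

lemma Wset_finite : (Wset m n).Finite := by
  refine (Set.Finite.pi fun _ => Set.Finite.pi fun _ => Set.toFinite ({0, 1} : Set ℝ)).subset ?_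
  intro W hW
  simpa [Set.mem_pi] using hW.1

lemma nonneg_of_mem_Wset {W : Matrix (Fin (m+1)) (Fin (n+1)) ℝ} (hW : W ∈ Wset m n)
    (i : Fin (m+1)) (j : Fin (n+1)) : 0 ≤ W i j := by
  rcases hW.1 i j with h | h <;> simp [h]

lemma isAssignmentMatrix_topLeft {W : Matrix (Fin (m+1)) (Fin (n+1)) ℝ} (hW : W ∈ Wset m n)
    (hlastCol : ∀ i : Fin m, W i.castSucc (Fin.last n) = 0)
    (hlastRow : ∀ j : Fin n, W (Fin.last m) j.castSucc = 0) :
    IsAssignmentMatrix (topLeft W) := by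
  refine ⟨fun i j => hW.1 _ _, fun i => ?_, fun j => ?_⟩
  · simpa [Fin.sum_univ_castSucc, hlastCol, topLeft] using hW.2.2.1 i
  · simpa [Fin.sum_univ_castSucc, hlastRow, topLeft] using hW.2.1 j

end Padding

section Cost

variable {p c ε : ℝ} {X Y : GraphNA} {W : Matrix (Fin (X.n+1)) (Fin (Y.n+1)) ℝ}

lemma missFalseCost_nonneg (hc : 0 ≤ c) (hW : W ∈ Wset X.n Y.n) :
    0 ≤ missFalseCost p c X Y W :=
  mul_nonneg (by positivity) (add_nonneg (Finset.sum_nonneg fun _ _ => nonneg_of_mem_Wset hW _ _)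
    (Finset.sum_nonneg fun _ _ => nonneg_of_mem_Wset hW _ _))

lemma edgeCost_nonneg (hε : 0 ≤ ε) : 0 ≤ edgeCost p ε X Y W :=
  mul_nonneg (by positivity) (onorm_nonneg _)

lemma missFalseCost_eq_zero_iff (hc : 0 < c) (hW : W ∈ Wset X.n Y.n) :
    missFalseCost p c X Y W = 0 ↔
      (∀ i : Fin X.n, W i.castSucc (Fin.last Y.n) = 0) ∧
        ∀ j : Fin Y.n, W (Fin.last X.n) j.castSucc = 0 := by
  have hnonneg := nonneg_of_mem_Wset hW
  rw [missFalseCost, mul_eq_zero, or_iff_right (by positivity),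
    add_eq_zero_iff_of_nonneg (Finset.sum_nonneg fun _ _ => hnonneg _ _)
      (Finset.sum_nonneg fun _ _ => hnonneg _ _),
    Finset.sum_eq_zero_iff_of_nonneg fun _ _ => hnonneg _ _,
    Finset.sum_eq_zero_iff_of_nonneg fun _ _ => hnonneg _ _]
  simp

lemma edgeCost_eq_zero_iff (hε : 0 < ε) :
    edgeCost p ε X Y W = 0 ↔ X.A * topLeft W = topLeft W * Y.A := by
  rw [edgeCost, mul_eq_zero, or_iff_right (by positivity), onorm_eq_zero_iff, sub_eq_zero]

lemma exists_cost_eq_zero_iff (hc : 0 < c) (hε : 0 < ε) :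
    (∃ W ∈ Wset X.n Y.n, missFalseCost p c X Y W + edgeCost p ε X Y W = 0) ↔
      ∃ M : Matrix (Fin X.n) (Fin Y.n) ℝ, IsAssignmentMatrix M ∧ X.A * M = M * Y.A := by
  constructor
  · rintro ⟨W, hW, hcost⟩
    rw [add_eq_zero_iff_of_nonneg (missFalseCost_nonneg hc.le hW) (edgeCost_nonneg hε.le),
      missFalseCost_eq_zero_iff hc hW, edgeCost_eq_zero_iff hε] at hcost
    obtain ⟨⟨hlastCol, hlastRow⟩, hcomm⟩ := hcost
    exact ⟨topLeft W, isAssignmentMatrix_topLeft hW hlastCol hlastRow, hcomm⟩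
  · rintro ⟨M, hM, hcomm⟩
    have hW := padZero_mem_Wset hM
    refine ⟨padZero M, hW, ?_⟩
    rw [(missFalseCost_eq_zero_iff hc hW).2 ⟨by simp, by simp⟩,
      (edgeCost_eq_zero_iff hε).2 (by simpa using hcomm), add_zero]

end Cost

lemma dtilde_eq_zero_iff_exists_cost_eq_zero {p c ε : ℝ} (hp : p ≠ 0) (hc : 0 ≤ c)
    (hε : 0 ≤ ε) {X Y : GraphNA} :
    dtilde p c ε X Y = 0 ↔
      ∃ W ∈ Wset X.n Y.n, missFalseCost p c X Y W + edgeCost p ε X Y W = 0 := by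
  have hcosts : {v | ∃ W ∈ Wset X.n Y.n, v = missFalseCost p c X Y W + edgeCost p ε X Y W} =
      (fun W => missFalseCost p c X Y W + edgeCost p ε X Y W) '' Wset X.n Y.n := by
    ext v
    simp [eq_comm]
  have hnonneg : ∀ v ∈ (fun W => missFalseCost p c X Y W + edgeCost p ε X Y W) '' Wset X.n Y.n,
      0 ≤ v := by
    rintro _ ⟨W, hW, rfl⟩
    exact add_nonneg (missFalseCost_nonneg hc hW) (edgeCost_nonneg hε)
  rw [dtilde, hcosts, Real.rpow_eq_zero (Real.sInf_nonneg hnonneg) (one_div_ne_zero hp),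
    sInf_eq_zero_iff_zero_mem (Wset_nonempty.image _) (Wset_finite.image _) hnonneg]
  simp

/-- For graphs without node attributes and the graph GOSPA
pseudometric `d̃^{(c,ε)}` computed by minimizing over the binary assignment matrices
`𝒲_{X,Y}`, one has `d̃^{(c,ε)}(X,Y) = 0` if and only if `X` and `Y` are isomorphic,
i.e. `n_X = n_Y` and there exists a permutation matrix `P` with `A_X P = P A_Y`. -/
theorem dtilde_eq_zero_iff_isomorphic (p c ε : ℝ) (hp : 1 ≤ p) (hc : 0 < c)
    (hε : 0 < ε) (X Y : GraphNA) :
    dtilde p c ε X Y = 0 ↔ Isomorphic X Y := by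
  rw [dtilde_eq_zero_iff_exists_cost_eq_zero (by positivity) hc.le hε.le,
    exists_cost_eq_zero_iff hc hε, isomorphic_iff_exists_isAssignmentMatrix]

end GraphGOSPA
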